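/- Every topological vector space (over the reals) is a κ-sequential topological space. -/

import Mathlib

/-!
A real topological vector space is path connected, and path connectedness alone suffices.
If `W` is open, `a ∉ W` and `b ∈ W`, follow a path `γ` from `a` to `b`: the set of times at which
the path lies outside `W` is compact, so it has a last time `c`, and `γ c ∉ W`. After `c` the
path stays in the open set `W`, so `γ c` is the limit of a sequence in `W`. For `W` open and not
closed, such `a` and `b` exist because `W` is neither `∅` nor the whole space.
-/

open Filter Topology Set

def KappaFU (X : Type*) [TopologicalSpace X] : Prop :=
  ∀ U : Set X, IsOpen U → ∀ x ∈ closure U,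
    ∃ u : ℕ → X, (∀ n, u n ∈ U) ∧ Filter.Tendsto u Filter.atTop (nhds x)

def OCA (X : Type*) [TopologicalSpace X] : Prop :=
  ∀ W : Set X, IsOpen W → ∀ z ∈ closure W,
    ∃ K : Set X, IsCompact K ∧ z ∈ K ∧ z ∈ closure (K ∩ W)

def WOCA (X : Type*) [TopologicalSpace X] : Prop :=
  ∀ W : Set X, IsOpen W → ¬ IsClosed W →
    ∃ z ∈ closure W \ W, ∃ K : Set X, IsCompact K ∧ z ∈ K ∧ z ∈ closure (K ∩ W)

def KappaSeq (X : Type*) [TopologicalSpace X] : Prop :=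
  ∀ W : Set X, IsOpen W → ¬ IsClosed W →
    ∃ z ∈ closure W \ W, ∃ u : ℕ → X, (∀ n, u n ∈ W) ∧ Filter.Tendsto u Filter.atTop (nhds z)

def KappaPseudoOpen {X Y : Type*} [TopologicalSpace X] [TopologicalSpace Y] (f : X → Y) : Prop :=
  ∀ (y : Y) (U : Set X), IsOpen U → f ⁻¹' {y} ⊆ U → y ∈ interior (closure (f '' U))

def WeaklyKappaPseudoOpen {X Y : Type*} [TopologicalSpace X] [TopologicalSpace Y] (f : X → Y) : Prop :=
  ∀ U : Set Y, IsOpen U → (IsClosed U ↔ IsClosed (f ⁻¹' U))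

theorem IsOpen.exists_seq_tendsto_notMem_of_path {X : Type*} [TopologicalSpace X] {W : Set X}
    (hW : IsOpen W) {a b : X} (γ : Path a b) (ha : a ∉ W) (hb : b ∈ W) :
    ∃ z ∉ W, ∃ u : ℕ → X, (∀ n, u n ∈ W) ∧ Tendsto u atTop (𝓝 z) := by
  set K : Set ℝ := Icc 0 1 ∩ γ.extend ⁻¹' Wᶜ
  have hK : IsCompact K :=
    isCompact_Icc.inter_right (hW.isClosed_compl.preimage γ.continuous_extend)
  have h0K : (0 : ℝ) ∈ K := ⟨left_mem_Icc.2 zero_le_one, by simpa using ha⟩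
  set c := sSup K
  have hcK : c ∈ K := hK.sSup_mem ⟨0, h0K⟩
  have hc1 : c < 1 := hcK.1.2.lt_of_ne fun h => hcK.2 (by simpa [h] using hb)
  have hW_after : ∀ t ∈ Ioo c 1, γ.extend t ∈ W := fun t ht => by_contra fun h =>
    (le_csSup hK.bddAbove ⟨⟨hcK.1.1.trans ht.1.le, ht.2.le⟩, h⟩).not_gt ht.1
  obtain ⟨s, -, hs_mem, hs⟩ := exists_seq_strictAnti_tendsto' hc1
  exact ⟨γ.extend c, hcK.2, fun n => γ.extend (s n), fun n => hW_after _ (hs_mem n),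
    (γ.continuous_extend.tendsto c).comp hs⟩

theorem PathConnectedSpace.kappaSeq (X : Type*) [TopologicalSpace X] [PathConnectedSpace X] :
    KappaSeq X := by
  intro W hW hW_not_closed
  obtain ⟨b, hb⟩ : W.Nonempty :=
    nonempty_iff_ne_empty.2 (by rintro rfl; exact hW_not_closed isClosed_empty)
  obtain ⟨a, ha⟩ : ∃ a, a ∉ W := by
    by_contra! h
    exact hW_not_closed (eq_univ_of_forall h ▸ isClosed_univ)
  obtain ⟨z, hz, u, hu_mem, hu⟩ :=
    hW.exists_seq_tendsto_notMem_of_path (PathConnectedSpace.somePath a b) ha hb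
  exact ⟨z, ⟨mem_closure_of_tendsto hu (.of_forall hu_mem), hz⟩, u, hu_mem, hu⟩

theorem tvs_kappaSeq (E : Type*) [AddCommGroup E] [Module ℝ E] [TopologicalSpace E]
    [IsTopologicalAddGroup E] [ContinuousSMul ℝ E] : KappaSeq E :=
  have : PathConnectedSpace E := IsTopologicalAddGroup.pathConnectedSpace
  PathConnectedSpace.kappaSeq E
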